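/- arXiv:1802.09211 — 2 statements merged into one kernel-verified Lean document; each statement's English description precedes it below -/
import Mathlib

section
/- If s : ℝ → ℝ is differentiable and satisfies s'(t) = -(c / s(t)) * (s(t) - a)^2 for all t, with s(t) ≠ a and s(t) ≠ 0 for all t, then the quantity F(t) := log |s(t) - a| - a / (s(t) - a) + c * t is constant in t (here a, c are real constants). -/
open Real

/-! Along a solution, `d/dt (log |s - a| - a / (s - a)) = s' · s / (s - a)² = -c`, so adding `c t`
gives a function with vanishing derivative, which is constant on `ℝ`. -/

theorem hasDerivAt_log_abs_sub_const_div {u : ℝ → ℝ} {u' t : ℝ} (a : ℝ) (hu : HasDerivAt u u' t)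
    (hut : u t ≠ 0) :
    HasDerivAt (fun t => log |u t| - a / u t) (u' * (u t + a) / u t ^ 2) t := by
  simp only [log_abs, div_eq_mul_inv a]
  refine ((hu.log hut).sub ((hu.inv hut).const_mul a)).congr_deriv ?_
  field_simp
  ring

theorem stmt0 (a c : ℝ) (s : ℝ → ℝ)
    (hs : ∀ t, HasDerivAt s (-(c / s t) * (s t - a) ^ 2) t)
    (hne : ∀ t, s t ≠ a) (hne0 : ∀ t, s t ≠ 0) :
    ∀ t₁ t₂ : ℝ,
      (Real.log |s t₁ - a| - a / (s t₁ - a) + c * t₁) =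
      (Real.log |s t₂ - a| - a / (s t₂ - a) + c * t₂) := by
  have hF : ∀ t, HasDerivAt (fun t => log |s t - a| - a / (s t - a) + c * t) 0 t := by
    intro t
    have hsa : s t - a ≠ 0 := sub_ne_zero.2 (hne t)
    refine ((hasDerivAt_log_abs_sub_const_div a ((hs t).sub_const a) hsa).add
      ((hasDerivAt_id t).const_mul c)).congr_deriv ?_
    field_simp [hne0 t]
    ring
  exact is_const_of_deriv_eq_zero (fun t => (hF t).differentiableAt) (fun t => (hF t).deriv)
end

section
/- Let a > 0, c > 0, and let s : [0, ∞) → ℝ be continuous with s(t) > a for all t and satisfying the implicit equation log(s(t) - a) - a/(s(t) - a) = -c·t + C for a constant C. Then s(t) → a as t → +∞. -/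
open Filter Real Set Topology

lemma strictMonoOn_log_sub_div {a : ℝ} (ha : 0 ≤ a) :
    StrictMonoOn (fun x => log x - a / x) (Ioi 0) := by
  intro x hx y _ hxy
  have hlog : log x < log y := log_lt_log hx hxy
  have hdiv : a / y ≤ a / x := div_le_div_of_nonneg_left ha hx hxy.le
  show log x - a / x < log y - a / y
  linarith

lemma tendsto_nhds_zero_of_log_sub_div_tendsto_atBot {α : Type*} {l : Filter α} {f : α → ℝ}
    {a : ℝ} (ha : 0 ≤ a) (hpos : ∀ᶠ x in l, 0 < f x)
    (h : Tendsto (fun x => log (f x) - a / f x) l atBot) :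
    Tendsto f l (𝓝 0) := by
  refine tendsto_order.2 ⟨fun b hb => hpos.mono fun x hx => hb.trans hx, fun ε hε => ?_⟩
  filter_upwards [hpos, h.eventually_lt_atBot (log ε - a / ε)] with x hx hlt
  exact (strictMonoOn_log_sub_div ha).lt_iff_lt hx hε |>.1 hlt

theorem stmt10_general (a c C : ℝ) (ha : 0 < a) (hc : 0 < c) (s : ℝ → ℝ)
    (hgt : ∀ t ∈ Set.Ici (0 : ℝ), a < s t)
    (himp : ∀ t ∈ Set.Ici (0 : ℝ),
      Real.log (s t - a) - a / (s t - a) = -c * t + C) :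
    Tendsto s atTop (nhds a) := by
  have hrhs : Tendsto (fun t : ℝ => -c * t + C) atTop atBot :=
    tendsto_atBot_add_const_right _ C (tendsto_id.const_mul_atTop_of_neg (neg_neg_of_pos hc))
  have hnonneg : ∀ᶠ t in atTop, t ∈ Ici (0 : ℝ) := eventually_ge_atTop 0
  have hpos : ∀ᶠ t in atTop, 0 < s t - a := hnonneg.mono fun t ht => sub_pos.2 (hgt t ht)
  have hlhs : Tendsto (fun t => log (s t - a) - a / (s t - a)) atTop atBot :=
    hrhs.congr' (hnonneg.mono fun t ht => (himp t ht).symm)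
  simpa using (tendsto_nhds_zero_of_log_sub_div_tendsto_atBot ha.le hpos hlhs).add_const a

theorem stmt10 (a c C : ℝ) (ha : 0 < a) (hc : 0 < c) (s : ℝ → ℝ)
    (hcont : ContinuousOn s (Set.Ici 0))
    (hgt : ∀ t ∈ Set.Ici (0 : ℝ), a < s t)
    (himp : ∀ t ∈ Set.Ici (0 : ℝ),
      Real.log (s t - a) - a / (s t - a) = -c * t + C) :
    Tendsto s atTop (nhds a) :=
  stmt10_general a c C ha hc s hgt himp
end
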